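/- arXiv:1912.10411 — 2 statements merged into one kernel-verified Lean document; each statement's English description precedes it below -/
import Mathlib

section
/- If f : \mathbb{R}^+ \to \mathbb{R}^+ is metric preserving and increasing, then f is ultrametric preserving. -/
def IsMetric {X : Type*} (d : X → X → ℝ) : Prop :=
  (∀ x y, d x y = 0 ↔ x = y) ∧ (∀ x y, d x y = d y x) ∧
  (∀ x y z, d x y ≤ d x z + d z y)

def IsUltrametric {X : Type*} (d : X → X → ℝ) : Prop :=
  IsMetric d ∧ ∀ x y z, d x y ≤ max (d x z) (d z y)

def Amenable (f : ℝ → ℝ) : Prop := f 0 = 0 ∧ ∀ x > 0, f x > 0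

def MetricPreserving (f : ℝ → ℝ) : Prop :=
  ∀ (X : Type) (d : X → X → ℝ), IsMetric d → IsMetric (fun x y => f (d x y))

def UltrametricPreserving (f : ℝ → ℝ) : Prop :=
  ∀ (X : Type) (d : X → X → ℝ), IsUltrametric d → IsUltrametric (fun x y => f (d x y))

def TriangleTriplet (a b c : ℝ) : Prop := a ≤ b + c ∧ b ≤ a + c ∧ c ≤ a + b

def StrongTriangleTriplet (a b c : ℝ) : Prop :=
  a ≤ max b c ∧ b ≤ max a c ∧ c ≤ max a b

theorem IsMetric.nonneg {X : Type*} {d : X → X → ℝ} (hd : IsMetric d) (x y : X) : 0 ≤ d x y := by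
  have h := hd.2.2 x x y
  rw [(hd.1 x x).mpr rfl, hd.2.1 y x] at h
  linarith

theorem le_max_map_of_le_max {f : ℝ → ℝ} (hf : ∀ a b : ℝ, 0 ≤ a → a ≤ b → f a ≤ f b)
    {a b c : ℝ} (hc : 0 ≤ c) (h : c ≤ max a b) : f c ≤ max (f a) (f b) := by
  rcases max_choice a b with hab | hab <;> rw [hab] at h
  · exact le_max_of_le_left (hf c a hc h)
  · exact le_max_of_le_right (hf c b hc h)

theorem stmt5 (f : ℝ → ℝ)
    (h1 : MetricPreserving f)
    (h2 : ∀ a b : ℝ, 0 ≤ a → a ≤ b → f a ≤ f b) :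
    UltrametricPreserving f := by
  rintro X d ⟨hd, hstrong⟩
  exact ⟨h1 X d hd, fun x y z => le_max_map_of_le_max h2 (hd.nonneg x y) (hstrong x y z)⟩
end

section
/- Let U be a non-empty class of non-empty ultrametric spaces, with Ran_U and the partial order \preccurlyeq_U defined via the relation G_U. For f : \mathbb{R}^+ \to \mathbb{R}^+, the following are equivalent: (1) the restriction of f to Ran_U is isotone from (Ran_U, \preccurlyeq_U) to (\mathbb{R}^+, \le) and satisfies f^{-1}(0) \cap Ran_U = \{0\}; (2) f \circ d is an ultrametric on X for every (X,d) \in U. -/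
/-! In an ultrametric space every triangle is isosceles with its two longest sides equal, so the
strong triangle inequality for `f ∘ d` only has to be checked on triples `d x y ≤ d x z = d z y`.
These are exactly the pairs related by `G`, whence monotonicity of `f` along `G` (and its
transitive closure) is equivalent to `f ∘ d` satisfying the strong triangle inequality; the
condition on the zero set of `f` is the separation axiom for `f ∘ d`. -/

theorem isUltrametric_of_le_max {X : Type*} {d : X → X → ℝ} (hzero : ∀ x y, d x y = 0 ↔ x = y)
    (hsymm : ∀ x y, d x y = d y x) (hmax : ∀ x y z, d x y ≤ max (d x z) (d z y)) :
    IsUltrametric d := by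
  -- `0 = d x x ≤ max (d x y) (d y x) = d x y`
  have hnonneg : ∀ x y, 0 ≤ d x y := fun x y => by
    simpa [(hzero x x).2 rfl, hsymm y x] using hmax x x y
  refine ⟨⟨hzero, hsymm, fun x y z => ?_⟩, hmax⟩
  exact (hmax x y z).trans (max_le_add_of_nonneg (hnonneg x z) (hnonneg z y))

namespace IsUltrametric

variable {X : Type*} {d : X → X → ℝ}

theorem eq_zero_iff (hd : IsUltrametric d) {x y : X} : d x y = 0 ↔ x = y := hd.1.1 x y

theorem self_eq_zero (hd : IsUltrametric d) (x : X) : d x x = 0 := hd.eq_zero_iff.2 rfl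

theorem symm (hd : IsUltrametric d) (x y : X) : d x y = d y x := hd.1.2.1 x y

theorem le_max (hd : IsUltrametric d) (x y z : X) : d x y ≤ max (d x z) (d z y) := hd.2 x y z

theorem eq_of_lt (hd : IsUltrametric d) {x y z : X} (h : d x z < d z y) : d x y = d z y := by
  refine le_antisymm ((hd.le_max x y z).trans (max_le h.le le_rfl)) ?_
  have hzy := hd.le_max z y x
  rw [hd.symm z x] at hzy
  exact (le_max_iff.1 hzy).resolve_left h.not_ge

theorem comp_le_max (hd : IsUltrametric d) {f : ℝ → ℝ}
    (hf : ∀ x y z, d x z = d z y → f (d x y) ≤ f (d x z)) (x y z : X) :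
    f (d x y) ≤ max (f (d x z)) (f (d z y)) := by
  rcases lt_trichotomy (d x z) (d z y) with h | h | h
  · rw [hd.eq_of_lt h]
    exact le_max_right _ _
  · exact le_max_of_le_left (hf x y z h)
  · rw [hd.symm z y, hd.symm x z] at h
    rw [hd.symm x y, hd.eq_of_lt h, hd.symm z x]
    exact le_max_left _ _

end IsUltrametric

theorem Relation.TransGen.le_of_le {α β : Type*} [Preorder β] {r : α → α → Prop} {f : α → β}
    (hf : ∀ a b, r a b → f a ≤ f b) {a b : α} (hab : Relation.TransGen r a b) : f a ≤ f b :=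
  Relation.transGen_eq_self.le _ _ (hab.lift f hf)

theorem stmt18 (ι : Type*) [Nonempty ι] (X : ι → Type*) (hX : ∀ i, Nonempty (X i))
    (d : ∀ i, X i → X i → ℝ) (hd : ∀ i, IsUltrametric (d i)) (f : ℝ → ℝ) :
    let RanU : Set ℝ := {t | ∃ i x y, d i x y = t}
    let G : ℝ → ℝ → Prop := fun s t =>
      ∃ (i : ι) (x₁ x₂ x₃ : X i), s = d i x₁ x₃ ∧ t = d i x₁ x₂ ∧ t = d i x₂ x₃
    let R : ℝ → ℝ → Prop := fun s t => Relation.TransGen G s t ∨ s = t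
    ((∀ s t, s ∈ RanU → t ∈ RanU → R s t → f s ≤ f t) ∧
      {t | t ∈ RanU ∧ f t = 0} = {0}) ↔
    (∀ i, IsUltrametric (fun x y => f (d i x y))) := by
  intro RanU G R
  constructor
  · rintro ⟨hmono, hzero⟩ i
    have hf0 : (0 : ℝ) ∈ {t | t ∈ RanU ∧ f t = 0} := hzero ▸ rfl
    have hsep : ∀ x y, f (d i x y) = 0 ↔ x = y := fun x y =>
      ⟨fun h => (hd i).eq_zero_iff.1 (hzero ▸ ⟨⟨i, x, y, rfl⟩, h⟩ : d i x y ∈ ({0} : Set ℝ)),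
        fun h => h ▸ (hd i).self_eq_zero x ▸ hf0.2⟩
    refine isUltrametric_of_le_max hsep (fun x y => by rw [(hd i).symm x y]) ?_
    refine (hd i).comp_le_max fun x y z h => hmono _ _ ⟨i, x, y, rfl⟩ ⟨i, x, z, rfl⟩ ?_
    exact Or.inl (.single ⟨i, x, z, y, rfl, rfl, h⟩)
  · intro hf
    have hG : ∀ s t, G s t → f s ≤ f t := by
      rintro s t ⟨j, x₁, x₂, x₃, rfl, rfl, h⟩
      simpa [← h] using (hf j).le_max x₁ x₃ x₂
    refine ⟨fun s t _ _ hst => hst.elim (·.le_of_le hG) (· ▸ le_rfl), ?_⟩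
    ext t
    constructor
    · rintro ⟨⟨j, x, y, rfl⟩, hft⟩
      rw [(hf j).eq_zero_iff.1 hft, (hd j).self_eq_zero]
      rfl
    · rintro rfl
      obtain ⟨i⟩ := ‹Nonempty ι›
      obtain ⟨x⟩ := hX i
      exact ⟨⟨i, x, x, (hd i).self_eq_zero x⟩, (hd i).self_eq_zero x ▸ (hf i).self_eq_zero x⟩
end
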